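/- Let Q be a polarized quiver in which all special arrows are loops, and let w be a primitive band for Q. Then w is symmetric (i.e. w^{-1} equals some rotation w^{[k+1]}w_{[k]} of w) if and only if some rotation of w is of the form ε* v ζ* v^{-1} for some word v and special letters ε* and ζ*. -/

import Mathlib

/- Core combinatorics of polarized quivers, letters, words, strings and bands,
   following Geiß, "Homomorphisms between representations of skewed-gentle algebras". -/

namespace SG

open Classical

/-- Signs: `true` stands for `+1`, `false` for `-1`. -/
abbrev Sign := Bool

/-- The raw data of a polarized quiver: vertices, arrows, a set of special arrows,
and polarized source/target maps with values in `V × {±1}`. -/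
structure PolQuiv where
  V : Type
  A : Type
  special : A → Prop
  src : A → V × Sign
  tgt : A → V × Sign

/-- The five kinds of letters associated to a polarized quiver:
direct (ordinary), inverse, special, trivial and trivial inverse letters. -/
inductive PLetter (V A : Type) where
  | ord : A → PLetter V A
  | inv : A → PLetter V A
  | sp : A → PLetter V A
  | triv : V → Sign → PLetter V A
  | trivInv : V → Sign → PLetter V A

namespace PolQuiv

variable (Q : PolQuiv)

/-- `-(i,ρ) = (i,-ρ)`. -/
def nneg (p : Q.V × Sign) : Q.V × Sign := (p.1, !p.2)

/-- The axioms of a polarized quiver: finiteness, injectivity of the polarized source and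
target maps, special arrows have polarization `-1` at both ends, and every special arrow
has a unique dual special arrow. -/
def IsPolarized : Prop :=
  Finite Q.V ∧ Finite Q.A ∧
  Function.Injective Q.src ∧ Function.Injective Q.tgt ∧
  (∀ a, Q.special a → (Q.src a).2 = false ∧ (Q.tgt a).2 = false) ∧
  (∀ a, Q.special a → ∃! a', Q.special a' ∧ Q.src a' = Q.tgt a ∧ Q.tgt a' = Q.src a)

/-- The dual special arrow `ε'` of a special arrow `ε` (junk value on other arrows). -/
noncomputable def dual (a : Q.A) : Q.A :=
  if h : ∃ a', Q.special a' ∧ Q.src a' = Q.tgt a ∧ Q.tgt a' = Q.src a then h.choose else a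

/-- An admissible path `a₁ a₂ ⋯ a_l` : `s(aᵢ) = -t(a_{i+1})`. -/
def IsAdmPath (p : List Q.A) : Prop :=
  p ≠ [] ∧ ∀ n a b, p[n]? = some a → p[n + 1]? = some b → Q.src a = Q.nneg (Q.tgt b)

/-- An admissible polarized quiver has only finitely many admissible paths. -/
def IsAdmissible : Prop := Q.IsPolarized ∧ {p : List Q.A | Q.IsAdmPath p}.Finite

/-- A loop. -/
def IsLoopArr (a : Q.A) : Prop := (Q.src a).1 = (Q.tgt a).1

/-- A skewed-gentle polarized quiver: admissible, and all special arrows are loops. -/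
def SkewedGentle : Prop := Q.IsAdmissible ∧ ∀ a, Q.special a → Q.IsLoopArr a

/-- A gentle polarized quiver: admissible with no special arrows. -/
def Gentle : Prop := Q.IsAdmissible ∧ ∀ a, ¬ Q.special a

abbrev Ltr := PLetter Q.V Q.A
abbrev Wd := List (PLetter Q.V Q.A)

/-- `(i,ρ)` admits trivial letters iff it is not the source of a special arrow. -/
def trivOK (i : Q.V) (ρ : Sign) : Prop := ∀ ε, Q.special ε → Q.src ε ≠ (i, ρ)

/-- Validity of a letter for `Q`. -/
def IsLetter : Q.Ltr → Prop
  | .ord a => ¬ Q.special a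
  | .inv a => ¬ Q.special a
  | .sp a => Q.special a
  | .triv i ρ => Q.trivOK i ρ
  | .trivInv i ρ => Q.trivOK i ρ

/-- The (partial) source of a letter; `none` encodes `*`. -/
def lsrc : Q.Ltr → Option (Q.V × Sign)
  | .ord a => some (Q.src a)
  | .inv a => some (Q.tgt a)
  | .sp a => some ((Q.src a).1, false)
  | .triv _ _ => none
  | .trivInv i ρ => some (i, ρ)

/-- The (partial) target of a letter; `none` encodes `*`. -/
def ltgt : Q.Ltr → Option (Q.V × Sign)
  | .ord a => some (Q.tgt a)
  | .inv a => some (Q.src a)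
  | .sp a => some ((Q.tgt a).1, false)
  | .triv i ρ => some (i, ρ)
  | .trivInv _ _ => none

/-- The inverse of a letter; `(ε^*)⁻¹ = (ε')^*`. -/
noncomputable def linv : Q.Ltr → Q.Ltr
  | .ord a => .inv a
  | .inv a => .ord a
  | .sp a => .sp (Q.dual a)
  | .triv i ρ => .trivInv i ρ
  | .trivInv i ρ => .triv i ρ

/-- The inverse of a word. -/
noncomputable def winv (w : Q.Wd) : Q.Wd := (w.map Q.linv).reverse

/-- A word: all letters valid and `s(wᵢ) = -t(w_{i+1})`. -/
def IsWord (w : Q.Wd) : Prop :=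
  (∀ l ∈ w, Q.IsLetter l) ∧
  ∀ n a b, w[n]? = some a → w[n + 1]? = some b →
    ∃ p, Q.lsrc a = some p ∧ Q.ltgt b = some (Q.nneg p)

/-- A word is right inextensible iff its last letter is a trivial letter. -/
def RightInext (w : Q.Wd) : Prop := ∃ i ρ, w.getLast? = some (.triv i ρ)

/-- A word is left inextensible iff its inverse is right inextensible. -/
def LeftInext (w : Q.Wd) : Prop := Q.RightInext (Q.winv w)

/-- A string: a left and right inextensible word. -/
def IsString (w : Q.Wd) : Prop := Q.IsWord w ∧ Q.LeftInext w ∧ Q.RightInext w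

/-- A band: a (nonempty) word `w` such that `ww` is also a word. -/
def IsBand (w : Q.Wd) : Prop := w ≠ [] ∧ Q.IsWord (w ++ w)

/-- A primitive word is not a proper power. -/
def Primitive (w : Q.Wd) : Prop :=
  ¬ ∃ (v : Q.Wd) (n : ℕ), 2 ≤ n ∧ w = (List.replicate n v).flatten

/-- The rotation `w^{[k+1]} w_{[k]}` of a word. -/
def rot (w : Q.Wd) (k : ℕ) : Q.Wd := w.drop k ++ w.take k

/-- A symmetric string: `w = w⁻¹`. -/
def SymmString (w : Q.Wd) : Prop := Q.IsString w ∧ Q.winv w = w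

/-- Primitive bands. -/
def pBa (w : Q.Wd) : Prop := Q.IsBand w ∧ Q.Primitive w

/-- A symmetric (primitive) band: `w⁻¹` is a rotation of `w`. -/
def SymmBand (w : Q.Wd) : Prop := Q.pBa w ∧ ∃ k, Q.winv w = Q.rot w k

/-- A symmetric primitive band in standard form `ε^* v ζ^* v⁻¹`. -/
def StdSymmBand (w : Q.Wd) : Prop :=
  Q.pBa w ∧ ∃ (a b : Q.A) (v : Q.Wd), Q.special a ∧ Q.special b ∧
    w = .sp a :: (v ++ .sp b :: Q.winv v)

/-- `pBa'`: asymmetric primitive bands together with symmetric primitive bands in standard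
form. -/
def pBa' (w : Q.Wd) : Prop :=
  (Q.pBa w ∧ ¬ ∃ k, Q.winv w = Q.rot w k) ∨ Q.StdSymmBand w

/-- The partial order on letters with a common target: `α < 1_{i,ρ} < β⁻¹`. -/
def letterLT : Q.Ltr → Q.Ltr → Prop
  | .ord a, .triv i ρ => ¬ Q.special a ∧ Q.trivOK i ρ ∧ Q.tgt a = (i, ρ)
  | .ord a, .inv b => ¬ Q.special a ∧ ¬ Q.special b ∧ Q.tgt a = Q.src b
  | .triv i ρ, .inv b => ¬ Q.special b ∧ Q.trivOK i ρ ∧ Q.src b = (i, ρ)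
  | _, _ => False

/-- The induced lexicographic order on words. -/
def wordLT (v w : Q.Wd) : Prop :=
  ∃ (p u u' : Q.Wd) (a b : Q.Ltr), v = p ++ a :: u ∧ w = p ++ b :: u' ∧ Q.letterLT a b

def wordLE (v w : Q.Wd) : Prop := Q.wordLT v w ∨ v = w

/-- The associated gentle polarized quiver `Q̂`: all arrows become ordinary. -/
def hat : PolQuiv := ⟨Q.V, Q.A, fun _ => False, Q.src, Q.tgt⟩

/-- A vertex carrying a special loop. -/
def specialAt (i : Q.V) : Prop := ∃ ε, Q.special ε ∧ (Q.src ε).1 = i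

/-- The special loop at a vertex, as an `Option`. -/
noncomputable def sloopL (i : Q.V) : Option Q.A :=
  if h : Q.specialAt i then some h.choose else none

/-- The `Q̂`-letter `ε^{δ1}` at a vertex carrying a special loop (junk otherwise). -/
noncomputable def epsAt (i : Q.V) (δ : Bool) : Q.Ltr :=
  if h : Q.specialAt i then (if δ then .ord h.choose else .inv h.choose) else .triv i false

/-- The canonical map `F` on letters, from letters of `Q̂` to letters of `Q`. -/
noncomputable def Fmap : Q.Ltr → Q.Ltr
  | .ord a => if Q.special a then .sp a else .ord a
  | .inv a => if Q.special a then .sp (Q.dual a) else .inv a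
  | .sp a => .sp a
  | .triv i ρ => if h : ρ = false ∧ Q.specialAt i then .sp h.2.choose else .triv i ρ
  | .trivInv i ρ => if h : ρ = false ∧ Q.specialAt i then .sp h.2.choose else .trivInv i ρ

/-- `F` on words. -/
noncomputable def Fword (w : Q.Wd) : Q.Wd := w.map Q.Fmap

/-- Punctured letters: trivial letters `1_{i,-1}^{±1}` with a special loop at `i`. -/
def IsPunct : Q.Ltr → Prop
  | .triv i ρ => ρ = false ∧ Q.specialAt i
  | .trivInv i ρ => ρ = false ∧ Q.specialAt i
  | _ => False

def LeftPunct (w : Q.Wd) : Prop := ∃ l, w.head? = some l ∧ Q.IsPunct l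
def RightPunct (w : Q.Wd) : Prop := ∃ l, w.getLast? = some l ∧ Q.IsPunct l

open Classical in
/-- The completion `x̄` of a string or band `x` for `Q̂`: apply `F` after reflecting at each
punctured end. -/
noncomputable def completionW (w : Q.Wd) : Q.Wd :=
  if Q.LeftPunct w then
    if Q.RightPunct w then Q.Fword w ++ Q.Fword (Q.hat.winv ((w.drop 1).dropLast))
    else Q.Fword (Q.hat.winv (w.drop 1)) ++ Q.Fword w
  else
    if Q.RightPunct w then Q.Fword w ++ Q.Fword (Q.hat.winv w.dropLast)
    else Q.Fword w

/-- The letter of `A(w)` at position `k`, for `w` a string: special letters `ε^*` are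
replaced by `ε` if `(w_{[k-1]})⁻¹ > w^{[k+1]}` and by `ε⁻¹` if `(w_{[k-1]})⁻¹ < w^{[k+1]}`. -/
def ALetterStr (w : Q.Wd) (k : ℕ) (xl : Q.Ltr) : Prop :=
  match w[k]? with
  | some (.sp a) =>
      (xl = .ord a ∧ Q.wordLT (w.drop (k + 1)) (Q.winv (w.take k))) ∨
      (xl = .inv a ∧ Q.wordLT (Q.winv (w.take k)) (w.drop (k + 1)))
  | some l => xl = l
  | none => False

/-- The letter of `A(w)` at position `k`, for `w` a band, with the comparison
`w_{[k-1]}⁻¹ (w^{[k+1]})⁻¹` versus `w^{[k+1]} w_{[k-1]}`. -/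
def ALetterBand (w : Q.Wd) (k : ℕ) (xl : Q.Ltr) : Prop :=
  match w[k]? with
  | some (.sp a) =>
      (xl = .ord a ∧
        Q.wordLT (w.drop (k + 1) ++ w.take k) (Q.winv (w.drop (k + 1) ++ w.take k))) ∨
      (xl = .inv a ∧
        Q.wordLT (Q.winv (w.drop (k + 1) ++ w.take k)) (w.drop (k + 1) ++ w.take k))
  | some l => xl = l
  | none => False

/-- `x = A(w)` for an asymmetric string `w`. -/
def AStrAsym (w x : Q.Wd) : Prop :=
  Q.IsString w ∧ Q.winv w ≠ w ∧ x.length = w.length ∧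
  ∀ k xl, x[k]? = some xl → Q.ALetterStr w k xl

/-- `x = A(w)` for a symmetric string `w = v ε^* v⁻¹`. -/
def AStrSym (w x : Q.Wd) : Prop :=
  Q.IsString w ∧ Q.winv w = w ∧
  ∃ (v : Q.Wd) (a : Q.A), Q.special a ∧ w = v ++ .sp a :: Q.winv v ∧
    ∃ y : Q.Wd, y.length = v.length ∧ (∀ k xl, y[k]? = some xl → Q.ALetterStr w k xl) ∧
      x = y ++ [.triv (Q.src a).1 false]

/-- `x = A(w)` for an asymmetric primitive band `w`. -/
def ABandAsym (w x : Q.Wd) : Prop :=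
  Q.pBa w ∧ (¬ ∃ k, Q.winv w = Q.rot w k) ∧ x.length = w.length ∧
  ∀ k xl, x[k]? = some xl → Q.ALetterBand w k xl

/-- `x = A(w)` for a symmetric band in standard form `w = ε_a^* v ε_b^* v⁻¹`. -/
def ABandSym (w x : Q.Wd) : Prop :=
  Q.pBa w ∧ ∃ (a b : Q.A) (v : Q.Wd), Q.special a ∧ Q.special b ∧
    w = .sp a :: (v ++ .sp b :: Q.winv v) ∧
    ∃ y : Q.Wd, y.length = v.length ∧
      (∀ k xl, y[k]? = some xl → Q.ALetterBand w (k + 1) xl) ∧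
      x = .trivInv (Q.src a).1 false :: (y ++ [.triv (Q.src b).1 false])

/-- `x = A(w)` for `w ∈ St(Q) ∪ pBa'(Q)`. -/
def ARel (w x : Q.Wd) : Prop :=
  Q.AStrAsym w x ∨ Q.AStrSym w x ∨ Q.ABandAsym w x ∨ Q.ABandSym w x

/-- Admissible strings for `Q̂` (with respect to `F`), following Qiu–Zhou. -/
def AdmStr (x : Q.Wd) : Prop :=
  Q.hat.IsString x ∧
  (∀ k a, (x[k]? = some (.ord a) ∨ x[k]? = some (.inv a)) → Q.special a →
    Q.hat.winv (x.take k) ≠ x.drop k ∧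
    (x[k]? = some (.ord a) ↔ Q.hat.wordLT (x.drop (k + 1)) (Q.hat.winv (x.take k)))) ∧
  (Q.LeftPunct x → Q.RightPunct x →
    Q.IsBand (Q.completionW x) ∧ Q.Primitive (Q.completionW x))

/-- Admissible bands for `Q̂` (with respect to `F`). -/
def AdmBand (x : Q.Wd) : Prop :=
  Q.hat.IsBand x ∧ Q.hat.Primitive x ∧
  (∀ k a, (x[k]? = some (.ord a) ∨ x[k]? = some (.inv a)) → Q.special a →
    Q.hat.winv (x.drop (k + 1) ++ x.take k) ≠ x.drop (k + 1) ++ x.take k ∧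
    (x[k]? = some (.ord a) ↔
      Q.hat.wordLT (x.drop (k + 1) ++ x.take k)
        (Q.hat.winv (x.drop (k + 1) ++ x.take k)))) ∧
  (Q.IsBand (Q.Fword x) ∧ Q.Primitive (Q.Fword x) ∧
    ¬ ∃ k, Q.winv (Q.Fword x) = Q.rot (Q.Fword x) k)

/-- Admissible words. -/
def IsAdm (x : Q.Wd) : Prop := Q.AdmStr x ∨ Q.AdmBand x

end PolQuiv

end SG

/-! Since special arrows are loops, every special letter `ε*` is its own inverse, and no word
contains a letter followed or preceded by its inverse: the two polarizations at the junction
would have to be opposite and equal. Hence a nonempty word `u` with `u⁻¹ = u` is of the form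
`v ε* v⁻¹`. If `w⁻¹` is the rotation `t s` of the band `w = s t`, then `s⁻¹ = s` and `t⁻¹ = t`,
and both are nonempty because `w⁻¹ ≠ w` (the last letter of `w` is followed by the first one in
`ww`); so `w = v₁ ε* v₁⁻¹ v₂ ζ* v₂⁻¹`, a rotation of `ε* (v₁⁻¹ v₂) ζ* (v₁⁻¹ v₂)⁻¹`. Conversely,
`(ε* v ζ* v⁻¹)⁻¹ = v ζ* v⁻¹ ε*` is a rotation of `ε* v ζ* v⁻¹`. -/

namespace SG

namespace PolQuiv

def Follows (Q : PolQuiv) (x y : Q.Ltr) : Prop :=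
  ∃ p, Q.lsrc x = some p ∧ Q.ltgt y = some (Q.nneg p)

variable {Q : PolQuiv}

@[simp] lemma winv_nil : Q.winv [] = [] := rfl

@[simp] lemma winv_append (u v : Q.Wd) : Q.winv (u ++ v) = Q.winv v ++ Q.winv u := by
  simp [winv]

@[simp] lemma winv_cons (x : Q.Ltr) (u : Q.Wd) : Q.winv (x :: u) = Q.winv u ++ [Q.linv x] := by
  simp [winv]

@[simp] lemma length_winv (u : Q.Wd) : (Q.winv u).length = u.length := by
  simp [winv]

lemma getLast?_winv (u : Q.Wd) : (Q.winv u).getLast? = u.head?.map Q.linv := by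
  simp [winv, List.getLast?_reverse, List.head?_map]

lemma isRotated_winv {u v : Q.Wd} (h : u ~r v) : Q.winv u ~r Q.winv v :=
  (h.map Q.linv).reverse

lemma isRotated_rot (w : Q.Wd) (k : ℕ) : w ~r Q.rot w k := by
  rcases le_or_gt k w.length with hk | hk
  · exact ⟨k, List.rotate_eq_drop_append_take hk⟩
  · simpa [rot, List.drop_eq_nil_of_le hk.le, List.take_of_length_le hk.le] using
      List.IsRotated.refl w

lemma exists_eq_rot_of_isRotated {w x : Q.Wd} (h : w ~r x) : ∃ k, x = Q.rot w k := by
  obtain ⟨k, hk, rfl⟩ := List.isRotated_iff_mod.mp h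
  exact ⟨k, List.rotate_eq_drop_append_take hk⟩

lemma IsWord.isChain {w : Q.Wd} (h : Q.IsWord w) : w.IsChain Q.Follows :=
  List.isChain_iff_getElem.mpr fun i hi =>
    h.2 i _ _ (List.getElem?_eq_getElem (by omega)) (List.getElem?_eq_getElem hi)

lemma IsBand.isLetter {w : Q.Wd} (h : Q.IsBand w) : ∀ l ∈ w, Q.IsLetter l :=
  fun l hl => h.2.1 l (List.mem_append_left _ hl)

lemma not_follows_of_ltgt_eq_lsrc {x y : Q.Ltr} (h : Q.ltgt y = Q.lsrc x) : ¬ Q.Follows x y := by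
  rintro ⟨p, hx, hy⟩
  rw [h, hx, Option.some_inj] at hy
  simpa [nneg] using congrArg Prod.snd hy

section SpecialLoops

variable (hpol : Q.IsPolarized) (hloops : ∀ a, Q.special a → Q.IsLoopArr a)
include hpol hloops

lemma dual_eq_self {a : Q.A} (ha : Q.special a) : Q.dual a = a := by
  obtain ⟨-, -, -, -, hsign, huniq⟩ := hpol
  have hst : Q.src a = Q.tgt a := Prod.ext (hloops a ha) ((hsign a ha).1.trans (hsign a ha).2.symm)
  have hex : ∃ a', Q.special a' ∧ Q.src a' = Q.tgt a ∧ Q.tgt a' = Q.src a := ⟨a, ha, hst, hst.symm⟩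
  obtain ⟨a', -, ha'⟩ := huniq a ha
  rw [dual, dif_pos hex, ha' _ hex.choose_spec, ha' a ⟨ha, hst, hst.symm⟩]

lemma linv_sp {a : Q.A} (ha : Q.special a) : Q.linv (.sp a) = .sp a := by
  rw [linv, dual_eq_self hpol hloops ha]

lemma linv_linv {x : Q.Ltr} (hx : Q.IsLetter x) : Q.linv (Q.linv x) = x := by
  cases x with
  | sp a => rw [linv_sp hpol hloops hx, linv_sp hpol hloops hx]
  | _ => rfl

lemma winv_winv {u : Q.Wd} (hu : ∀ l ∈ u, Q.IsLetter l) : Q.winv (Q.winv u) = u := by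
  simp only [winv, List.map_reverse, List.reverse_reverse, List.map_map]
  exact List.map_congr_left (fun x hx => linv_linv hpol hloops (hu x hx)) |>.trans (List.map_id' u)

lemma ltgt_linv {x : Q.Ltr} (hx : Q.IsLetter x) : Q.ltgt (Q.linv x) = Q.lsrc x := by
  cases x with
  | sp a => simp [linv_sp hpol hloops hx, ltgt, lsrc, (hloops a hx).symm]
  | _ => rfl

lemma lsrc_linv {x : Q.Ltr} (hx : Q.IsLetter x) : Q.lsrc (Q.linv x) = Q.ltgt x := by
  cases x with
  | sp a =>
    simp [linv_sp hpol hloops hx, ltgt, lsrc, show (Q.src a).1 = (Q.tgt a).1 from hloops a hx]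
  | _ => rfl

lemma not_follows_linv {x : Q.Ltr} (hx : Q.IsLetter x) : ¬ Q.Follows x (Q.linv x) :=
  not_follows_of_ltgt_eq_lsrc (ltgt_linv hpol hloops hx)

lemma not_linv_follows {x : Q.Ltr} (hx : Q.IsLetter x) : ¬ Q.Follows (Q.linv x) x :=
  not_follows_of_ltgt_eq_lsrc (lsrc_linv hpol hloops hx).symm

lemma exists_eq_append_sp_winv_of_winv_eq_self {u : Q.Wd} (hval : ∀ l ∈ u, Q.IsLetter l)
    (hchain : u.IsChain Q.Follows) (hu : Q.winv u = u) (hne : u ≠ []) :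
    ∃ (v : Q.Wd) (a : Q.A), Q.special a ∧ u = v ++ .sp a :: Q.winv v := by
  induction u using List.bidirectionalRec with
  | nil => exact absurd rfl hne
  | singleton x =>
    cases x with
    | sp a => exact ⟨[], a, hval _ List.mem_cons_self, rfl⟩
    | _ => simp [linv] at hu
  | cons_append x mid y ih =>
    simp only [winv_cons, winv_append, winv_nil, List.nil_append, List.cons_append,
      List.cons.injEq] at hu
    obtain ⟨hmid, hy⟩ := List.append_inj' hu.2 rfl
    obtain rfl : y = Q.linv x := (List.singleton_inj.mp hy).symm
    have hval' : ∀ l ∈ mid, Q.IsLetter l := fun l hl => hval l (by simp [hl])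
    have hchain' : mid.IsChain Q.Follows :=
      (List.isChain_cons.mp (hchain.left_of_append)).2
    obtain rfl | hmid_ne := eq_or_ne mid []
    · exact absurd (List.isChain_pair.mp hchain) (not_follows_linv hpol hloops (hval x (by simp)))
    obtain ⟨v, a, ha, rfl⟩ := ih hval' hchain' hmid hmid_ne
    exact ⟨x :: v, a, ha, by simp⟩

lemma winv_ne_self_of_isBand {w : Q.Wd} (hw : Q.IsBand w) : Q.winv w ≠ w := by
  intro hsym
  have hlast := getLast?_winv w
  rw [hsym, List.getLast?_eq_some_getLast hw.1, List.head?_eq_some_head hw.1, Option.map_some,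
    Option.some_inj] at hlast
  have hfollows := hw.2.isChain.rel_getLast_head_of_append hw.1 hw.1
  rw [hlast] at hfollows
  exact not_linv_follows hpol hloops (hw.isLetter _ (List.head_mem hw.1)) hfollows

theorem exists_rot_eq_sp_append_sp_winv_of_winv_eq_rot {w : Q.Wd} (hw : Q.IsBand w) {k : ℕ}
    (hk : Q.winv w = Q.rot w k) :
    ∃ (k : ℕ) (a b : Q.A) (v : Q.Wd), Q.special a ∧ Q.special b ∧
      Q.rot w k = .sp a :: (v ++ .sp b :: Q.winv v) := by
  have hsym := winv_ne_self_of_isBand hpol hloops hw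
  have hval := hw.isLetter
  have hchain := hw.2.isChain.left_of_append
  obtain ⟨s, t, rfl, hrot⟩ : ∃ s t, w = s ++ t ∧ Q.rot w k = t ++ s :=
    ⟨_, _, (List.take_append_drop k w).symm, rfl⟩
  obtain ⟨ht, hs⟩ : Q.winv t = t ∧ Q.winv s = s :=
    List.append_inj (by rw [← winv_append, hk, hrot]) (length_winv t)
  have hs_ne : s ≠ [] := by rintro rfl; simp [ht] at hsym
  have ht_ne : t ≠ [] := by rintro rfl; simp [hs] at hsym
  obtain ⟨v₁, a, ha, rfl⟩ := exists_eq_append_sp_winv_of_winv_eq_self hpol hloops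
    (fun l hl => hval l (List.mem_append_left _ hl)) hchain.left_of_append hs hs_ne
  obtain ⟨v₂, b, hb, rfl⟩ := exists_eq_append_sp_winv_of_winv_eq_self hpol hloops
    (fun l hl => hval l (List.mem_append_right _ hl)) hchain.right_of_append ht ht_ne
  have hv₁ : ∀ l ∈ v₁, Q.IsLetter l := fun l hl => hval l (by simp [hl])
  refine ⟨v₁.length, a, b, Q.winv v₁ ++ v₂, ha, hb, ?_⟩
  simp [rot, winv_winv hpol hloops hv₁]

theorem isRotated_winv_of_rot_eq_sp_append_sp_winv {w : Q.Wd} (hval : ∀ l ∈ w, Q.IsLetter l)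
    {k : ℕ} {a b : Q.A} {v : Q.Wd} (ha : Q.special a) (hb : Q.special b)
    (hk : Q.rot w k = .sp a :: (v ++ .sp b :: Q.winv v)) :
    w ~r Q.winv w := by
  have hwu := isRotated_rot w k
  have hv : ∀ l ∈ v, Q.IsLetter l := fun l hl => hval l (hwu.mem_iff.mpr (by simp [hk, hl]))
  have hu : Q.rot (Q.rot w k) 1 = Q.winv (Q.rot w k) := by
    rw [hk]
    simp [rot, linv_sp hpol hloops ha, linv_sp hpol hloops hb, winv_winv hpol hloops hv]
  exact hwu.trans ((hu ▸ isRotated_rot _ 1).trans (isRotated_winv hwu).symm)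

end SpecialLoops

end PolQuiv

open PolQuiv

/-- **Symmetric bands.**  Let `Q` be a polarized quiver in which all special arrows are
loops and `w` a primitive band for `Q`.  Then `w` is symmetric (i.e. `w⁻¹` is a rotation of
`w`) if and only if some rotation of `w` has the form `ε^* v ζ^* v⁻¹` for some word `v` and
special letters `ε^*`, `ζ^*`. -/
theorem statement_4 (Q : PolQuiv) (hpol : Q.IsPolarized)
    (hloops : ∀ a, Q.special a → Q.IsLoopArr a)
    (w : Q.Wd) (hw : Q.pBa w) :
    (∃ k, Q.winv w = Q.rot w k) ↔
      ∃ (k : ℕ) (a b : Q.A) (v : Q.Wd), Q.special a ∧ Q.special b ∧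
        Q.rot w k = .sp a :: (v ++ .sp b :: Q.winv v) := by
  refine ⟨fun ⟨k, hk⟩ => exists_rot_eq_sp_append_sp_winv_of_winv_eq_rot hpol hloops hw.1 hk, ?_⟩
  rintro ⟨k, a, b, v, ha, hb, hk⟩
  exact exists_eq_rot_of_isRotated
    (isRotated_winv_of_rot_eq_sp_append_sp_winv hpol hloops hw.1.isLetter ha hb hk)

end SG
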